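/- Let w ∈ 𝔐(X) and let (u₁, q₁) and (u₂, q₂) be two placements in w (i.e., q₁|_{u₁} = w = q₂|_{u₂}). If the breadth of u₁ is 1, then the placements (u₁, q₁) and (u₂, q₂) cannot be intersecting. -/
import Mathlib


namespace OpMon

/-- Letters of bracketed words: either a variable or a bracketed word. -/
inductive Letter (X : Type) : Type
  | of : X → Letter X
  | br : List (Letter X) → Letter X

/-- The free operated monoid `𝔐(X)`, modeled as lists of letters (free monoid on letters). -/
abbrev M (X : Type) := List (Letter X)

/-- The operator `⌊ ⌋` on `𝔐(X)`. -/
def L {X : Type} (w : M X) : M X := [Letter.br w]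

mutual
  /-- Substitute each variable by a word (letter version). -/
  def bindL {Y Z : Type} : Letter Y → (Y → M Z) → M Z
    | .of y, f => f y
    | .br w, f => [.br (bindW w f)]
  /-- Substitute each variable by a word (word version). -/
  def bindW {Y Z : Type} : M Y → (Y → M Z) → M Z
    | [], _ => []
    | a :: as, f => bindL a f ++ bindW as f
end

mutual
  /-- Count occurrences of variables satisfying `p` (letter version). -/
  def cntL {Y : Type} (p : Y → Bool) : Letter Y → ℕ
    | .of y => if p y then 1 else 0
    | .br w => cntW p w
  /-- Count occurrences of variables satisfying `p` (word version). -/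
  def cntW {Y : Type} (p : Y → Bool) : M Y → ℕ
    | [] => 0
    | a :: as => cntL p a + cntW p as
end

/-- The star letter `⋆`, modeled as `none`. -/
def starW {X : Type} : M (Option X) := [Letter.of none]

/-- `q` is a `⋆`-bracketed word: exactly one occurrence of `⋆`. -/
def IsStar {X : Type} (q : M (Option X)) : Prop :=
  cntW (fun o => o.isNone) q = 1

/-- Substitution `q|_u` of `u` for `⋆`. -/
def sub {X : Type} (q : M (Option X)) (u : M X) : M X :=
  bindW q (fun o => Option.elim o u (fun x => [Letter.of x]))

/-- Embed `𝔐(X)` into `𝔐(X ∪ {⋆})`. -/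
def emb {X : Type} (w : M X) : M (Option X) :=
  bindW w (fun x => [Letter.of (some x)])

/-- Substitute a `⋆`-word `r` for the `⋆` of `q`, yielding a word on `X ∪ {⋆}`. -/
def subS {X : Type} (q r : M (Option X)) : M (Option X) :=
  bindW q (fun o => Option.elim o r (fun x => [Letter.of (some x)]))

/-- `p` is a `(⋆₁,⋆₂)`-bracketed word (⋆₁ = `none`, ⋆₂ = `some none`). -/
def IsStar2 {X : Type} (p : M (Option (Option X))) : Prop :=
  cntW (fun o => o.isNone) p = 1 ∧
  cntW (fun o => match o with | some none => true | _ => false) p = 1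

/-- Substitution `p|_{u₁,u₂}`. -/
def sub2 {X : Type} (p : M (Option (Option X))) (u₁ u₂ : M X) : M X :=
  bindW p (fun o => match o with
    | none => u₁
    | some none => u₂
    | some (some x) => [Letter.of x])

/-- Substitution `p|_{u₁,⋆₂}`, a `⋆`-word. -/
def sub2L {X : Type} (p : M (Option (Option X))) (u₁ : M X) : M (Option X) :=
  bindW p (fun o => match o with
    | none => emb u₁
    | some none => [Letter.of none]
    | some (some x) => [Letter.of (some x)])

/-- Substitution `p|_{⋆₁,u₂}`, a `⋆`-word. -/
def sub2R {X : Type} (p : M (Option (Option X))) (u₂ : M X) : M (Option X) :=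
  bindW p (fun o => match o with
    | none => [Letter.of none]
    | some none => emb u₂
    | some (some x) => [Letter.of (some x)])

/-- `R^c`. -/
def Rc {X : Type} (R : Set (M X × M X)) : Set (M X × M X) :=
  {p | ∃ q a b, IsStar q ∧ (a, b) ∈ R ∧ p = (sub q a, sub q b)}

/-- Inverse relation `R⁻¹`. -/
def relInv {X : Type} (R : Set (M X × M X)) : Set (M X × M X) :=
  {p | (p.2, p.1) ∈ R}

/-- Closure under right mult. (C1), left mult. (C2), and the operator (C3). -/
def Closed {X : Type} (S : Set (M X × M X)) : Prop :=
  ∀ a b, (a, b) ∈ S → ∀ c : M X,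
    (a ++ c, b ++ c) ∈ S ∧ (c ++ a, c ++ b) ∈ S ∧ (L a, L b) ∈ S

/-- Composition of relations. -/
def relComp {X : Type} (R S : Set (M X × M X)) : Set (M X × M X) :=
  {p | ∃ c, (p.1, c) ∈ R ∧ (c, p.2) ∈ S}

/-- `relPow R n = R^(n+1)`. -/
def relPow {X : Type} (R : Set (M X × M X)) : ℕ → Set (M X × M X)
  | 0 => R
  | n + 1 => relComp (relPow R n) R

/-- Operated congruence. -/
def IsOpCong {X : Type} (T : Set (M X × M X)) : Prop :=
  (∀ a, (a, a) ∈ T) ∧ (∀ a b, (a, b) ∈ T → (b, a) ∈ T) ∧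
  (∀ a b c, (a, b) ∈ T → (b, c) ∈ T → (a, c) ∈ T) ∧ Closed T

/-- The operated congruence `⟨R⟩` generated by `R`. -/
def ocong {X : Type} (R : Set (M X × M X)) : Set (M X × M X) :=
  ⋂₀ {T | IsOpCong T ∧ R ⊆ T}

/-- Equivalence relation (as a set of pairs). -/
def IsEqv {X : Type} (T : Set (M X × M X)) : Prop :=
  (∀ a, (a, a) ∈ T) ∧ (∀ a b, (a, b) ∈ T → (b, a) ∈ T) ∧
  (∀ a b c, (a, b) ∈ T → (b, c) ∈ T → (a, c) ∈ T)

/-- The equivalence `T^e` generated by `T`. -/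
def eqgen {X : Type} (T : Set (M X × M X)) : Set (M X × M X) :=
  ⋂₀ {E | IsEqv E ∧ T ⊆ E}

/-- A monomial order: a well-founded linear order compatible with the operations. -/
def IsMonomialOrder {X : Type} (lt : M X → M X → Prop) : Prop :=
  WellFounded lt ∧
  (∀ a b, a = b ∨ lt a b ∨ lt b a) ∧
  (∀ a b c, lt a b → lt b c → lt a c) ∧
  (∀ u v w, lt u v → lt (u ++ w) (v ++ w) ∧ lt (w ++ u) (w ++ v) ∧ lt (L u) (L v))

/-- The term-rewriting system `Π_S`. -/
def PiS {X : Type} (lt : M X → M X → Prop) (S : Set (M X × M X)) : Set (M X × M X) :=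
  {p | ∃ q t v, IsStar q ∧ ((t, v) ∈ S ∨ (v, t) ∈ S) ∧ lt v t ∧ p = (sub q t, sub q v)}

/-- One-step rewriting. -/
def Rew {X : Type} (lt : M X → M X → Prop) (S : Set (M X × M X)) (a b : M X) : Prop :=
  (a, b) ∈ PiS lt S

/-- Joinability under `Π_S`. -/
def Joinable {X : Type} (lt : M X → M X → Prop) (S : Set (M X × M X)) (f g : M X) : Prop :=
  ∃ h, Relation.ReflTransGen (Rew lt S) f h ∧ Relation.ReflTransGen (Rew lt S) g h

/-- Termination of `Π_S`. -/
def Terminating {X : Type} (lt : M X → M X → Prop) (S : Set (M X × M X)) : Prop :=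
  ¬ ∃ f : ℕ → M X, ∀ n, Rew lt S (f n) (f (n + 1))

/-- Confluence of `Π_S`. -/
def Confluent {X : Type} (lt : M X → M X → Prop) (S : Set (M X × M X)) : Prop :=
  ∀ f g h, Relation.ReflTransGen (Rew lt S) f g → Relation.ReflTransGen (Rew lt S) f h →
    Joinable lt S g h

/-- Irreducible elements: `𝔐(X) \ Dom(Π_S)`. -/
def Irr {X : Type} (lt : M X → M X → Prop) (S : Set (M X × M X)) : Set (M X) :=
  {f | ∀ g, ¬ Rew lt S f g}

/-- Predecessors of `a`. -/
def Pre {X : Type} (lt : M X → M X → Prop) (S : Set (M X × M X)) (a : M X) : Set (M X) :=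
  {f | Relation.ReflTransGen (Rew lt S) f a}

/-- `W` is a section of `⟨S⟩`: every congruence class meets `W` in exactly one element. -/
def IsSection {X : Type} (S : Set (M X × M X)) (W : Set (M X)) : Prop :=
  ∀ a : M X, ∃! w, w ∈ W ∧ (a, w) ∈ ocong S

/-- Separated placements `(u₁,q₁)`, `(u₂,q₂)` in `w`. -/
def Separated {X : Type} (u₁ : M X) (q₁ : M (Option X)) (u₂ : M X) (q₂ : M (Option X))
    (w : M X) : Prop :=
  ∃ p, IsStar2 p ∧ q₁ = sub2R p u₂ ∧ q₂ = sub2L p u₁ ∧ w = sub2 p u₁ u₂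

/-- Nested placements: one context is a subcontext of the other. -/
def Nested {X : Type} (q₁ q₂ : M (Option X)) : Prop :=
  ∃ q, IsStar q ∧ (q₂ = subS q₁ q ∨ q₁ = subS q₂ q)

/-- Intersecting placements `(u₁,q₁)`, `(u₂,q₂)` in `w`. -/
def Intersecting {X : Type} (w u₁ : M X) (q₁ : M (Option X)) (u₂ : M X)
    (q₂ : M (Option X)) : Prop :=
  ∃ q a b c, IsStar q ∧ a ≠ ([] : M X) ∧ b ≠ ([] : M X) ∧ c ≠ ([] : M X) ∧
    w = sub q (a ++ b ++ c) ∧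
    ((q₁ = subS q (starW ++ emb c) ∧ q₂ = subS q (emb a ++ starW)) ∨
     (q₁ = subS q (emb a ++ starW) ∧ q₂ = subS q (starW ++ emb c)))

/-- Defining relations of the free `∗`-monoid. -/
def SStar (X : Type) : Set (M X × M X) :=
  {p | (∃ w : M X, p = (L (L w), w)) ∨
       (∃ u v : M X, u ≠ [] ∧ v ≠ [] ∧ p = (L (u ++ v), L v ++ L u)) ∨
       p = (L [], [])}

/-- Defining relations of the free group. -/
def SGrp (X : Type) : Set (M X × M X) :=
  {p | (∃ w : M X, p = (L (L w), w)) ∨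
       (∃ u v : M X, u ≠ [] ∧ v ≠ [] ∧ p = (L (u ++ v), L v ++ L u)) ∨
       (∃ w : M X, p = (L w ++ w, [])) ∨
       (∃ w : M X, p = (w ++ L w, []))}


theorem bindW_append {Y Z : Type} (xs ys : M Y) (f : Y → M Z) :
    bindW (xs ++ ys) f = bindW xs f ++ bindW ys f := by
  induction xs with
  | nil => simp [bindW]
  | cons a as ih => simp [bindW, ih, List.append_assoc]

mutual
theorem bindL_assoc {A B C : Type} (l : Letter A) (f : A → M B) (g : B → M C) :
    bindW (bindL l f) g = bindL l (fun a => bindW (f a) g) := by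
  cases l with
  | of a => simp [bindL]
  | br w => simp [bindL, bindW, bindW_assoc w f g]
theorem bindW_assoc {A B C : Type} (w : M A) (f : A → M B) (g : B → M C) :
    bindW (bindW w f) g = bindW w (fun a => bindW (f a) g) := by
  cases w with
  | nil => simp [bindW]
  | cons l rest =>
    simp [bindW, bindW_append, bindL_assoc l f g, bindW_assoc rest f g]
end

mutual
theorem bindL_id {A : Type} (l : Letter A) :
    bindL l (fun x => [Letter.of x]) = [l] := by
  cases l with
  | of a => simp [bindL]
  | br w => simp [bindL, bindW_id w]
theorem bindW_id {A : Type} (w : M A) :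
    bindW w (fun x => [Letter.of x]) = w := by
  cases w with
  | nil => rfl
  | cons l rest => simp [bindW, bindL_id l, bindW_id rest]
end

theorem sub_subS {X : Type} (q r : M (Option X)) (u : M X) :
    sub (subS q r) u = sub q (sub r u) := by
  unfold sub subS
  rw [bindW_assoc]
  congr 1
  funext o
  cases o with
  | none => rfl
  | some x => simp [bindW, bindL]

theorem sub_starW {X : Type} (u : M X) : sub starW u = u := by
  simp [sub, starW, bindW, bindL]

theorem sub_emb {X : Type} (c u : M X) : sub (emb c) u = c := by
  unfold sub emb
  rw [bindW_assoc]
  have : (fun x : X => bindW [Letter.of (some x)]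
      (fun o => Option.elim o u (fun y => [Letter.of y]))) = fun x => [Letter.of x] := by
    funext x; simp [bindW, bindL]
  rw [this, bindW_id]

/-- The substitution function for `sub`. -/
def sf {X : Type} (u : M X) : Option X → M X :=
  fun o => Option.elim o u (fun x => [Letter.of x])

mutual
theorem bindL_const {X : Type} (l : Letter (Option X))
    (h : cntL (fun o => o.isNone) l = 0) (x y : M X) :
    bindL l (sf x) = bindL l (sf y) := by
  cases l with
  | of o =>
    cases o with
    | none => simp [cntL] at h
    | some t => rfl
  | br w =>
    simp only [bindL]
    rw [bindW_const w h x y]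
theorem bindW_const {X : Type} (q : M (Option X))
    (h : cntW (fun o => o.isNone) q = 0) (x y : M X) :
    bindW q (sf x) = bindW q (sf y) := by
  cases q with
  | nil => rfl
  | cons l rest =>
    simp only [cntW] at h
    simp only [bindW]
    rw [bindL_const l (by omega) x y, bindW_const rest (by omega) x y]
end

mutual
theorem bindL_inj {X : Type} (l : Letter (Option X))
    (h : cntL (fun o => o.isNone) l = 1) (x y : M X)
    (hxy : bindL l (sf x) = bindL l (sf y)) : x = y := by
  cases l with
  | of o =>
    cases o with
    | none => simpa [bindL, sf] using hxy
    | some t => simp [cntL] at h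
  | br w =>
    simp only [bindL, List.cons.injEq, Letter.br.injEq] at hxy
    exact bindW_inj w h x y hxy.1
theorem bindW_inj {X : Type} (q : M (Option X))
    (h : cntW (fun o => o.isNone) q = 1) (x y : M X)
    (hxy : bindW q (sf x) = bindW q (sf y)) : x = y := by
  cases q with
  | nil => simp [cntW] at h
  | cons l rest =>
    simp only [cntW] at h
    simp only [bindW] at hxy
    rcases Nat.eq_zero_or_pos (cntL (fun o => o.isNone) l) with h0 | hpos
    · rw [bindL_const l h0 x y] at hxy
      exact bindW_inj rest (by omega) x y (List.append_cancel_left hxy)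
    · have h1 : cntL (fun o => o.isNone) l = 1 := by omega
      rw [bindW_const rest (by omega) x y] at hxy
      exact bindL_inj l h1 x y (List.append_cancel_right hxy)
end

theorem sub_inj {X : Type} (q : M (Option X)) (hq : IsStar q) (x y : M X)
    (hxy : sub q x = sub q y) : x = y :=
  bindW_inj q hq x y hxy

/-- a placement whose word has breadth 1 cannot intersect another placement. -/
theorem breadth_one_not_intersecting (X : Type) (w u₁ u₂ : M X)
    (q₁ q₂ : M (Option X)) (hq₁ : IsStar q₁) (hq₂ : IsStar q₂)
    (h₁ : sub q₁ u₁ = w) (h₂ : sub q₂ u₂ = w) (hu : u₁.length = 1) :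
    ¬ Intersecting w u₁ q₁ u₂ q₂ := by
  rintro ⟨q, a, b, c, hq, ha, hb, hc, hw, hcase⟩
  have hal : 1 ≤ a.length := List.length_pos_iff.mpr ha
  have hbl : 1 ≤ b.length := List.length_pos_iff.mpr hb
  have hcl : 1 ≤ c.length := List.length_pos_iff.mpr hc
  rcases hcase with ⟨hq1, _⟩ | ⟨hq1, _⟩
  · -- q₁ = subS q (⋆ ++ emb c) : sub q (u₁ ++ c) = sub q (a ++ b ++ c)
    have : sub q (u₁ ++ c) = sub q (a ++ b ++ c) := by
      have := h₁
      rw [hq1, sub_subS] at this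
      rw [show sub (starW ++ emb c) u₁ = u₁ ++ c by
        unfold sub
        rw [bindW_append]
        change sub starW u₁ ++ sub (emb c) u₁ = _
        rw [sub_starW, sub_emb]] at this
      rw [this, hw]
    have he : u₁ ++ c = a ++ b ++ c := sub_inj q hq _ _ this
    have := congrArg List.length he
    simp at this
    omega
  · -- q₁ = subS q (emb a ++ ⋆) : sub q (a ++ u₁) = sub q (a ++ b ++ c)
    have : sub q (a ++ u₁) = sub q (a ++ b ++ c) := by
      have := h₁
      rw [hq1, sub_subS] at this
      rw [show sub (emb a ++ starW) u₁ = a ++ u₁ by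
        unfold sub
        rw [bindW_append]
        change sub (emb a) u₁ ++ sub starW u₁ = _
        rw [sub_starW, sub_emb]] at this
      rw [this, hw]
    have he : a ++ u₁ = a ++ b ++ c := sub_inj q hq _ _ this
    have := congrArg List.length he
    simp at this
    omega

end OpMon
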